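/- arXiv:2401.17218 — 2 statements merged into one kernel-verified Lean document; each statement's English description precedes it below -/
import Mathlib

section
/- Characterization of dcat of a power: for m ≥ 1 and a path-connected metric space X, dcat(X^m) ≤ n if and only if the restriction C_{n+1}(ξ_m) : A_{n+1}(X) → X^m of the fibration B_{n+1}(ξ_m) to measures supported on paths starting at a fixed basepoint x_0 admits a continuous section. In particular, dcat(X) = dsecat(p_0) for the evaluation fibration p_0 : P_0(X) → X. -/
open MeasureTheory unitInterval

noncomputable section

/-- The path space `P(X) = C([0,1], X)` with the compact-open topology. -/
abbrev PathSp (X : Type*) [TopologicalSpace X] : Type _ := C(unitInterval, X)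

/-- The space `B_n(Z)` of probability measures on a metric space `Z` supported on at most
`n` points, as a subspace of the space of probability measures with the Lévy–Prokhorov metric. -/
def Bmeas (n : ℕ) (Z : Type*) [MetricSpace Z] : Type _ :=
  letI : MeasurableSpace Z := borel Z
  {μ : LevyProkhorov (ProbabilityMeasure Z) //
    ∃ S : Finset Z, S.card ≤ n ∧ (LevyProkhorov.toMeasureEquiv μ : ProbabilityMeasure Z) (↑S : Set Z) = 1}

noncomputable instance (n : ℕ) (Z : Type*) [MetricSpace Z] : TopologicalSpace (Bmeas n Z) :=
  letI : MeasurableSpace Z := borel Z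
  haveI : BorelSpace Z := ⟨rfl⟩
  instTopologicalSpaceSubtype

/-- The underlying probability measure of an element of `B_n(Z)`. -/
def Bmeas.meas {n : ℕ} {Z : Type*} [MetricSpace Z] (μ : Bmeas n Z) :
    @ProbabilityMeasure Z (borel Z) :=
  LevyProkhorov.toMeasureEquiv μ.1

/-- `μ ∈ B_n(Z)` is supported on the set `A`. -/
def DistributedOn {Z : Type*} [MetricSpace Z] {n : ℕ} (μ : Bmeas n Z) (A : Set Z) : Prop :=
  ∃ S : Finset Z, (↑S : Set Z) ⊆ A ∧ Bmeas.meas μ (↑S : Set Z) = 1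

/-- The time points `t_j = j/(m-1)`, `j = 0, …, m-1`, in `[0,1]`. -/
def tpt (m : ℕ) (j : Fin m) : unitInterval :=
  Set.projIcc 0 1 zero_le_one ((j : ℝ) / ((m : ℝ) - 1))

/-- A `k`-distributed `m`-navigation algorithm on `X`. -/
def IsNavAlg (m k : ℕ) {X : Type*} [MetricSpace X]
    (s : (Fin m → X) → Bmeas k (PathSp X)) : Prop :=
  Continuous s ∧ ∀ x : Fin m → X,
    DistributedOn (s x) {φ : PathSp X | ∀ j : Fin m, φ (tpt m j) = x j}

/-- The `m`-th sequential distributional topological complexity. -/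
noncomputable def dTC (m : ℕ) (X : Type*) [MetricSpace X] : ℕ∞ :=
  sInf {c : ℕ∞ | ∃ k : ℕ, c = k ∧
    ∃ s : (Fin m → X) → Bmeas (k + 1) (PathSp X), IsNavAlg m (k + 1) s}

/-- A `k`-contraction of `Y` to the point `y₀`. -/
def IsContr (k : ℕ) {Y : Type*} [MetricSpace Y] (y₀ : Y)
    (H : Y → Bmeas k (PathSp Y)) : Prop :=
  Continuous H ∧ ∀ y : Y,
    DistributedOn (H y) {φ : PathSp Y | φ 0 = y ∧ φ 1 = y₀}

/-- The distributional Lusternik–Schnirelmann category. -/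
noncomputable def dcat (Y : Type*) [MetricSpace Y] : ℕ∞ :=
  sInf {c : ℕ∞ | ∃ k : ℕ, c = k ∧
    ∃ (y₀ : Y) (H : Y → Bmeas (k + 1) (PathSp Y)), IsContr (k + 1) y₀ H}

/-- The classical `m`-th sequential topological complexity. -/
noncomputable def TCcl (m : ℕ) (X : Type*) [TopologicalSpace X] : ℕ∞ :=
  sInf {c : ℕ∞ | ∃ k : ℕ, c = k ∧
    ∃ (U : Fin (k + 1) → Set (Fin m → X)) (s : ∀ i : Fin (k + 1), C(U i, PathSp X)),
      (∀ i, IsOpen (U i)) ∧ (∀ x, ∃ i, x ∈ U i) ∧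
      ∀ (i : Fin (k + 1)) (x : U i) (j : Fin m), (s i x) (tpt m j) = (x : Fin m → X) j}

/-- The homotopy lifting property with respect to all spaces (Hurewicz fibration). -/
def IsHurFib {E B : Type*} [TopologicalSpace E] [TopologicalSpace B] (p : E → B) : Prop :=
  ∀ (Z : Type) [TopologicalSpace Z] (f : C(Z, E)) (H : C(Z × unitInterval, B)),
    (∀ z, H (z, 0) = p (f z)) →
      ∃ G : C(Z × unitInterval, E),
        (∀ z t, p (G (z, t)) = H (z, t)) ∧ ∀ z, G (z, 0) = f z

/-- `E_k(p)`: the space of probability measures supported on at most `k` points of a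
single fiber of `p`, as a subspace of `B_k(E)`. -/
def FibMeas (k : ℕ) {E B : Type*} [MetricSpace E] (p : E → B) : Type _ :=
  {μ : Bmeas k E // ∃ b : B, DistributedOn μ (p ⁻¹' {b})}

instance (k : ℕ) {E B : Type*} [MetricSpace E] (p : E → B) :
    TopologicalSpace (FibMeas k p) := instTopologicalSpaceSubtype

/-- The map `B_k(p) : E_k(p) → B` sending a fiberwise supported measure to its base point. -/
noncomputable def fibProj (k : ℕ) {E B : Type*} [MetricSpace E] (p : E → B)
    (μ : FibMeas k p) : B :=
  Classical.choose μ.2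

/-- The distributional sectional category of a map `p : E → B`. -/
noncomputable def dsecat {E B : Type*} [MetricSpace E] [MetricSpace B] (p : E → B) : ℕ∞ :=
  sInf {c : ℕ∞ | ∃ k : ℕ, c = k ∧
    ∃ s : B → FibMeas (k + 1) p, Continuous s ∧ ∀ b, fibProj (k + 1) p (s b) = b}

/-- The fibration `π_m : P(X) → X^m`, `φ ↦ (φ(t_1), …, φ(t_m))`. -/
def piFib (m : ℕ) (X : Type*) [TopologicalSpace X] (φ : PathSp X) : Fin m → X :=
  fun j => φ (tpt m j)

/-- The fibration `ξ_m : P(X) → X^m`, `φ ↦ (φ(1/m), φ(2/m), …, φ(1))`. -/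
def xiFib (m : ℕ) (X : Type*) [TopologicalSpace X] (φ : PathSp X) : Fin m → X :=
  fun j => φ (Set.projIcc 0 1 zero_le_one (((j : ℝ) + 1) / (m : ℝ)))

/-- `A_{n+1}(X)`: the subspace of `P(X)_{n+1}(ξ_m)` of measures supported on paths
starting at the basepoint `x₀`. -/
def Asub (n m : ℕ) (X : Type*) [MetricSpace X] (x₀ : X) : Type _ :=
  {μ : FibMeas n (xiFib m X) // DistributedOn μ.1 {φ : PathSp X | φ 0 = x₀}}

instance (n m : ℕ) (X : Type*) [MetricSpace X] (x₀ : X) :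
    TopologicalSpace (Asub n m X x₀) := instTopologicalSpaceSubtype

/-- The space `P_0(X)` of paths ending at `x₀`, with the evaluation-at-`0` fibration. -/
def Pend (X : Type*) [MetricSpace X] (x₀ : X) : Type _ := {φ : PathSp X // φ 1 = x₀}

instance (X : Type*) [MetricSpace X] (x₀ : X) : MetricSpace (Pend X x₀) :=
  Subtype.metricSpace

/-- `p_0 : P_0(X) → X`, evaluation at time `0`. -/
def pZero (X : Type*) [MetricSpace X] (x₀ : X) (φ : Pend X x₀) : X := φ.1 0

/-! A distributed contraction of `X^m` to `y₀` is a continuous family of finitely supported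
measures on paths `φ` from `x` to `y₀`. Replacing each such `φ` by a path of `X` that starts at
`x₀` and passes through `φ(0)_j` at time `(j + 1)/m` turns it into a section of
`A_{n+1}(X) → X^m`; that path is a chain of loops at `x₀`, the `j`-th of which runs along a fixed
path to `y₀_j`, then along the `j`-th coordinate of `φ` reversed to `φ(0)_j`, and back.
Conversely a path `ψ` from `x₀` yields the path `t ↦ (ψ((1 - t)(j + 1)/m))_j` from `ξ_m ψ` to the
constant tuple at `x₀`. Likewise, appending a fixed path from the contraction point to `x₀`, or
forgetting that a path ends at `x₀`, identifies `dcat X` with `dsecat p₀`.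

All these path operations are `1`-Lipschitz for the uniform metric, and pushing measures forward
along a `1`-Lipschitz map defined on a closed set carrying them does not increase the
Lévy–Prokhorov distance, so the transformed families stay continuous and keep at most `n + 1`
atoms. -/

open Metric Set

theorem LipschitzWith.thickening_preimage_subset {Z W : Type*} [PseudoMetricSpace Z]
    [PseudoMetricSpace W] {f : Z → W} (hf : LipschitzWith 1 f) (r : ℝ) (B : Set W) :
    thickening r (f ⁻¹' B) ⊆ f ⁻¹' thickening r B := by
  intro x hx
  obtain ⟨z, hz, hxz⟩ := mem_thickening_iff.1 hx
  have hfxz : dist (f x) (f z) ≤ dist x z := by simpa using hf.dist_le_mul x z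
  exact mem_thickening_iff.2 ⟨f z, hz, hfxz.trans_lt hxz⟩

section LevyProkhorov

variable {Y Z W : Type*} [PseudoMetricSpace Y] [MeasurableSpace Y]
  [PseudoMetricSpace Z] [MeasurableSpace Z] [PseudoMetricSpace W] [MeasurableSpace W]

theorem levyProkhorovEDist_map_le [OpensMeasurableSpace W] {f : Z → W} (hf : LipschitzWith 1 f)
    (hfm : Measurable f) (μ ν : Measure Z) :
    levyProkhorovEDist (μ.map f) (ν.map f) ≤ levyProkhorovEDist μ ν := by
  have key {μ ν : Measure Z} {ε} (h : levyProkhorovEDist μ ν < ε) {B : Set W}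
      (hB : MeasurableSet B) : μ.map f B ≤ ν.map f (thickening ε.toReal B) + ε := by
    rw [Measure.map_apply hfm hB, Measure.map_apply hfm isOpen_thickening.measurableSet]
    exact (left_measure_le_of_levyProkhorovEDist_lt h (hfm hB)).trans
      (add_le_add_left (measure_mono (hf.thickening_preimage_subset _ _)) _)
  exact levyProkhorovEDist_le_of_forall _ _ _ fun ε B hε _ hB =>
    ⟨key hε hB, key ((levyProkhorovEDist_comm _ _).trans_lt hε) hB⟩

theorem levyProkhorovEDist_comap_le {e : Y → Z} (he : Isometry e) (hme : MeasurableEmbedding e)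
    {μ ν : Measure Z} (hμ : μ (range e)ᶜ = 0) (hν : ν (range e)ᶜ = 0) :
    levyProkhorovEDist (μ.comap e) (ν.comap e) ≤ levyProkhorovEDist μ ν := by
  have key {μ ν : Measure Z} (hν : ν (range e)ᶜ = 0) {ε} (h : levyProkhorovEDist μ ν < ε)
      {B : Set Y} (hB : MeasurableSet B) :
      μ.comap e B ≤ ν.comap e (thickening ε.toReal B) + ε := by
    rw [hme.comap_apply, hme.comap_apply]
    refine (left_measure_le_of_levyProkhorovEDist_lt h (hme.measurableSet_image.2 hB)).trans
      (add_le_add_left ?_ _)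
    rw [← measure_inter_conull hν]
    refine measure_mono ?_
    rintro _ ⟨hx, y, rfl⟩
    refine ⟨y, ?_, rfl⟩
    rw [mem_thickening_iff_infEDist_lt, ← Metric.infEDist_image he]
    exact mem_thickening_iff_infEDist_lt.1 hx
  exact levyProkhorovEDist_le_of_forall _ _ _ fun ε B hε _ hB =>
    ⟨key hν hε hB, key hμ ((levyProkhorovEDist_comm _ _).trans_lt hε) hB⟩

end LevyProkhorov

namespace MeasureTheory.ProbabilityMeasure

variable {Ω Ω' : Type*} [MeasurableSpace Ω] [MeasurableSpace Ω']

theorem apply_eq_one_iff (P : ProbabilityMeasure Ω) (s : Set Ω) :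
    P s = 1 ↔ (P : Measure Ω) s = 1 := by
  rw [← ennreal_coeFn_eq_coeFn_toMeasure, ENNReal.coe_eq_one]

theorem map_apply_image_eq_one (P : ProbabilityMeasure Ω) {f : Ω → Ω'} (hf : AEMeasurable f P)
    {s : Set Ω} (hs : MeasurableSet (f '' s)) (h : P s = 1) : P.map hf (f '' s) = 1 :=
  le_antisymm (apply_le_one _ _) <| by
    rw [map_apply _ _ hs, ← h]
    exact apply_mono _ (subset_preimage_image f s)

def comapSubtype {A : Set Ω} [MeasurableSpace A] (hA : MeasurableEmbedding ((↑) : A → Ω))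
    (P : ProbabilityMeasure Ω) (hPA : (P : Measure Ω) A = 1) : ProbabilityMeasure A :=
  ⟨(P : Measure Ω).comap (↑), ⟨by rwa [hA.comap_apply, image_univ, Subtype.range_coe]⟩⟩

theorem comapSubtype_apply {A : Set Ω} [MeasurableSpace A]
    (hA : MeasurableEmbedding ((↑) : A → Ω)) (P : ProbabilityMeasure Ω)
    (hPA : (P : Measure Ω) A = 1) (s : Set A) :
    (P.comapSubtype hA hPA : Measure A) s = (P : Measure Ω) ((↑) '' s) :=
  hA.comap_apply _ _

theorem comapSubtype_apply_preimage_eq_one {A : Set Ω} [MeasurableSpace A]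
    (hA : MeasurableEmbedding ((↑) : A → Ω)) (P : ProbabilityMeasure Ω)
    (hPA : (P : Measure Ω) A = 1) {s : Set Ω} (hsA : s ⊆ A) (hs : P s = 1) :
    P.comapSubtype hA hPA ((↑) ⁻¹' s) = 1 := by
  rw [apply_eq_one_iff, comapSubtype_apply, Subtype.image_preimage_coe, inter_eq_right.2 hsA]
  exact (apply_eq_one_iff _ _).1 hs

end MeasureTheory.ProbabilityMeasure

section FinitelySupported

variable {Z : Type*} [MetricSpace Z] {k : ℕ} {μ : Bmeas k Z} {A B : Set Z}

theorem DistributedOn.mono (h : DistributedOn μ A) (hAB : A ⊆ B) : DistributedOn μ B :=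
  let ⟨S, hSA, hS⟩ := h
  ⟨S, hSA.trans hAB, hS⟩

theorem DistributedOn.inter (hA : DistributedOn μ A) (hB : DistributedOn μ B) :
    DistributedOn μ (A ∩ B) := by
  borelize Z
  classical
  obtain ⟨S, hSA, hS⟩ := hA
  obtain ⟨T, hTB, hT⟩ := hB
  refine ⟨S ∩ T, by push_cast; exact inter_subset_inter hSA hTB, ?_⟩
  rw [ProbabilityMeasure.apply_eq_one_iff] at hS hT ⊢
  rwa [Finset.coe_inter, measure_inter_conull
    ((prob_compl_eq_zero_iff T.finite_toSet.measurableSet).2 hT)]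

theorem DistributedOn.nonempty (h : DistributedOn μ A) : A.Nonempty := by
  borelize Z
  obtain ⟨S, hSA, hS⟩ := h
  obtain rfl | ⟨z, hz⟩ := S.eq_empty_or_nonempty
  · simp at hS
  · exact ⟨z, hSA hz⟩

theorem DistributedOn.meas_eq_one (h : DistributedOn μ A) : μ.meas A = 1 := by
  borelize Z
  obtain ⟨S, hSA, hS⟩ := h
  exact le_antisymm (ProbabilityMeasure.apply_le_one _ _)
    (hS ▸ ProbabilityMeasure.apply_mono _ hSA)

theorem DistributedOn.exists_finset_card_le (h : DistributedOn μ A) :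
    ∃ S : Finset Z, S.card ≤ k ∧ ↑S ⊆ A ∧ μ.meas S = 1 := by
  obtain ⟨S₀, hcard, hS₀⟩ := μ.2
  obtain ⟨S, hS, hS1⟩ := (show DistributedOn μ S₀ from ⟨S₀, subset_rfl, hS₀⟩).inter h
  exact ⟨S, (Finset.card_le_card (Finset.coe_subset.1 (hS.trans inter_subset_left))).trans hcard,
    hS.trans inter_subset_right, hS1⟩

end FinitelySupported

namespace Bmeas

variable {Z W : Type*} [MetricSpace Z] [MetricSpace W] {k n : ℕ} {A B : Set Z}

def castLE (h : k ≤ n) (μ : Bmeas k Z) : Bmeas n Z :=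
  ⟨μ.1, let ⟨S, hcard, hS⟩ := μ.2; ⟨S, hcard.trans h, hS⟩⟩

theorem continuous_castLE (h : k ≤ n) : Continuous (castLE (Z := Z) h) := by
  borelize Z
  exact continuous_subtype_val.subtype_mk _

def map (f : Z → W) (hf : Continuous f) (μ : Bmeas k Z) : Bmeas k W :=
  letI := borel Z
  letI := borel W
  haveI : BorelSpace Z := ⟨rfl⟩
  haveI : BorelSpace W := ⟨rfl⟩
  ⟨.ofMeasure (μ.meas.map hf.aemeasurable), by
    classical
    obtain ⟨S, hcard, hS⟩ := μ.2
    exact ⟨S.image f, Finset.card_image_le.trans hcard, by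
      rw [Finset.coe_image]
      exact ProbabilityMeasure.map_apply_image_eq_one _ hf.aemeasurable
        (S.finite_toSet.image f).measurableSet hS⟩⟩

theorem distributedOn_map {f : Z → W} (hf : Continuous f) {μ : Bmeas k Z} {T : Set W}
    (h : DistributedOn μ A) (hAT : MapsTo f A T) : DistributedOn (μ.map f hf) T := by
  borelize Z W
  classical
  obtain ⟨S, hSA, hS⟩ := h
  refine ⟨S.image f, by rw [Finset.coe_image]; exact (hAT.mono_left hSA).image_subset, ?_⟩
  rw [Finset.coe_image]
  exact ProbabilityMeasure.map_apply_image_eq_one _ hf.aemeasurable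
    (S.finite_toSet.image f).measurableSet hS

theorem continuous_map {f : Z → W} (hf : LipschitzWith 1 f) :
    Continuous (map (k := k) f hf.continuous) := by
  borelize Z W
  have hlip : LipschitzWith 1 fun P : LevyProkhorov (ProbabilityMeasure Z) =>
      LevyProkhorov.ofMeasure (P.toMeasure.map hf.continuous.aemeasurable) :=
    LipschitzWith.of_edist_le fun P Q =>
      levyProkhorovEDist_map_le hf hf.continuous.measurable _ _
  exact (hlip.continuous.comp continuous_subtype_val).subtype_mk _

def restrict (hA : IsClosed A) (μ : Bmeas k Z) (hμ : DistributedOn μ A) : Bmeas k A :=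
  letI := borel Z
  letI := borel A
  haveI : BorelSpace Z := ⟨rfl⟩
  haveI : BorelSpace A := ⟨rfl⟩
  have hemb := hA.isClosedEmbedding_subtypeVal.measurableEmbedding
  have hμA := (μ.meas.apply_eq_one_iff A).1 hμ.meas_eq_one
  ⟨.ofMeasure (μ.meas.comapSubtype hemb hμA), by
    classical
    obtain ⟨S, hcard, hSA, hS⟩ := hμ.exists_finset_card_le
    refine ⟨S.preimage (↑) Subtype.val_injective.injOn,
      (Finset.card_preimage ..).trans_le ((Finset.card_filter_le _ _).trans hcard), ?_⟩
    rw [Finset.coe_preimage]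
    exact μ.meas.comapSubtype_apply_preimage_eq_one hemb hμA hSA hS⟩

theorem distributedOn_restrict (hA : IsClosed A) {μ : Bmeas k Z} (hμ : DistributedOn μ A)
    (hB : DistributedOn μ B) : DistributedOn (μ.restrict hA hμ) ((↑) ⁻¹' B) := by
  borelize Z
  let _ := borel A
  have _ : BorelSpace A := ⟨rfl⟩
  obtain ⟨S, hS, hS1⟩ := hB.inter hμ
  refine ⟨S.preimage (↑) Subtype.val_injective.injOn, ?_, ?_⟩ <;> rw [Finset.coe_preimage]
  · exact preimage_mono (hS.trans inter_subset_left)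
  · exact μ.meas.comapSubtype_apply_preimage_eq_one
      hA.isClosedEmbedding_subtypeVal.measurableEmbedding
      ((μ.meas.apply_eq_one_iff A).1 hμ.meas_eq_one) (hS.trans inter_subset_right) hS1

end Bmeas

theorem Continuous.bmeas_restrict {Y Z : Type*} [TopologicalSpace Y] [MetricSpace Z] {k : ℕ}
    {A : Set Z} {H : Y → Bmeas k Z} (hH : Continuous H) (hA : IsClosed A)
    (hHA : ∀ y, DistributedOn (H y) A) : Continuous fun y => (H y).restrict hA (hHA y) := by
  borelize Z
  let _ := borel A
  have _ : BorelSpace A := ⟨rfl⟩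
  have hemb := hA.isClosedEmbedding_subtypeVal.measurableEmbedding
  have hnull (P : ProbabilityMeasure Z) (hP : (P : Measure Z) A = 1) :
      (P : Measure Z) (range ((↑) : A → Z))ᶜ = 0 := by
    rwa [Subtype.range_coe, prob_compl_eq_zero_iff hA.measurableSet]
  let g (P : {P : LevyProkhorov (ProbabilityMeasure Z) // (P.toMeasure : Measure Z) A = 1}) :
      LevyProkhorov (ProbabilityMeasure A) :=
    .ofMeasure (P.1.toMeasure.comapSubtype hemb P.2)
  have hg : LipschitzWith 1 g := LipschitzWith.of_edist_le fun P Q =>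
    levyProkhorovEDist_comap_le isometry_subtype_coe hemb (hnull _ P.2) (hnull _ Q.2)
  exact (hg.continuous.comp ((continuous_subtype_val.comp hH).subtype_mk
    fun y => ((H y).meas.apply_eq_one_iff A).1 (hHA y).meas_eq_one)).subtype_mk _

section Transport

variable {Y Z W : Type*} [TopologicalSpace Y] [MetricSpace Z] [MetricSpace W] {k : ℕ}

theorem Continuous.bmeas_map {H : Y → Bmeas k Z} (hH : Continuous H) {f : Z → W}
    (hf : LipschitzWith 1 f) : Continuous fun y => (H y).map f hf.continuous :=
  (Bmeas.continuous_map hf).comp hH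

theorem exists_continuous_distributedOn_of_lipschitzWith {A : Set Z} (hA : IsClosed A)
    {f : A → W} (hf : LipschitzWith 1 f) {H : Y → Bmeas k Z} (hH : Continuous H)
    {B : Y → Set Z} (hHB : ∀ y, DistributedOn (H y) (B y)) (hBA : ∀ y, B y ⊆ A)
    {T : Y → Set W} (hBT : ∀ y, MapsTo f ((↑) ⁻¹' B y) (T y)) :
    ∃ G : Y → Bmeas k W, Continuous G ∧ ∀ y, DistributedOn (G y) (T y) := by
  have hHA y : DistributedOn (H y) A := (hHB y).mono (hBA y)
  exact ⟨_, (hH.bmeas_restrict hA hHA).bmeas_map hf, fun y =>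
    Bmeas.distributedOn_map _ (Bmeas.distributedOn_restrict hA _ (hHB y)) (hBT y)⟩

end Transport

section Fiberwise

variable {E B : Type*} [MetricSpace E] {k : ℕ} {p : E → B}

theorem distributedOn_fibProj (μ : FibMeas k p) : DistributedOn μ.1 (p ⁻¹' {fibProj k p μ}) :=
  Classical.choose_spec μ.2

theorem distributedOn_fiber_of_fibProj_eq {μ : FibMeas k p} {b : B} (h : fibProj k p μ = b) :
    DistributedOn μ.1 (p ⁻¹' {b}) :=
  h ▸ distributedOn_fibProj μ

theorem fibProj_eq_of_distributedOn {μ : FibMeas k p} {b : B}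
    (h : DistributedOn μ.1 (p ⁻¹' {b})) : fibProj k p μ = b := by
  obtain ⟨e, he, he'⟩ := (h.inter (distributedOn_fibProj μ)).nonempty
  exact he'.symm.trans he

end Fiberwise

theorem sInf_le_natCast_iff {P : ℕ → Prop} {n : ℕ} :
    sInf {c : ℕ∞ | ∃ k : ℕ, c = k ∧ P k} ≤ n ↔ ∃ k ≤ n, P k := by
  have hlt {c : ℕ∞} : c < n + 1 ↔ c ≤ n := ENat.lt_add_one_iff (ENat.natCast_ne_top n)
  simp_rw [← hlt, sInf_lt_iff, mem_ofPred_eq]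
  exact ⟨fun ⟨_, ⟨k, rfl, hk⟩, hkn⟩ => ⟨k, by exact_mod_cast hlt.1 hkn, hk⟩,
    fun ⟨k, hkn, hk⟩ => ⟨k, ⟨k, rfl, hk⟩, hlt.2 (by exact_mod_cast hkn)⟩⟩

theorem IsContr.castLE {Y : Type*} [MetricSpace Y] {k n : ℕ} {y₀ : Y}
    {H : Y → Bmeas k (PathSp Y)} (hH : IsContr k y₀ H) (h : k ≤ n) :
    IsContr n y₀ fun y => (H y).castLE h :=
  ⟨(Bmeas.continuous_castLE h).comp hH.1, hH.2⟩

theorem dcat_le_iff {Y : Type*} [MetricSpace Y] {n : ℕ} :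
    dcat Y ≤ n ↔ ∃ (y₀ : Y) (H : Y → Bmeas (n + 1) (PathSp Y)), IsContr (n + 1) y₀ H := by
  rw [dcat, sInf_le_natCast_iff]
  exact ⟨fun ⟨k, hk, y₀, H, hH⟩ => ⟨y₀, _, hH.castLE (by omega)⟩, fun h => ⟨n, le_rfl, h⟩⟩

theorem Path.dist_trans_apply_le {X : Type*} [PseudoMetricSpace X] {a b c a' b' c' : X}
    {γ : Path a b} {δ : Path b c} {γ' : Path a' b'} {δ' : Path b' c'} {D : ℝ}
    (hγ : ∀ t, dist (γ t) (γ' t) ≤ D) (hδ : ∀ t, dist (δ t) (δ' t) ≤ D) (t : I) :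
    dist (γ.trans δ t) (γ'.trans δ' t) ≤ D := by
  rw [Path.trans_apply, Path.trans_apply]
  split_ifs
  exacts [hγ _, hδ _]

section LoopChain

variable {X : Type*} [TopologicalSpace X] {z : X}

/-- The loop `γ j` runs on `[j + 1/2, j + 3/2]`. -/
def loopChain : (n : ℕ) → (Fin n → Path z z) → ℝ → X
  | 0, _, _ => z
  | n + 1, γ, t =>
      if t ≤ n + 1 / 2 then loopChain n (fun i => γ i.castSucc) t
      else (γ (Fin.last n)).extend (t - (n + 1 / 2))

theorem loopChain_of_le_half : ∀ {n : ℕ} (γ : Fin n → Path z z) {t : ℝ}, t ≤ 1 / 2 →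
    loopChain n γ t = z
  | 0, _, _, _ => rfl
  | n + 1, γ, t, ht => by
    rw [loopChain, if_pos (by linarith [(n.cast_nonneg : (0 : ℝ) ≤ n)])]
    exact loopChain_of_le_half _ ht

theorem loopChain_of_ge : ∀ {n : ℕ} (γ : Fin n → Path z z) {t : ℝ}, n + 1 / 2 ≤ t →
    loopChain n γ t = z
  | 0, _, _, _ => rfl
  | n + 1, γ, t, ht => by
    push_cast at ht
    rw [loopChain, if_neg (by linarith), Path.extend_of_one_le _ (by linarith)]

theorem continuous_loopChain : ∀ (n : ℕ) (γ : Fin n → Path z z), Continuous (loopChain n γ)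
  | 0, _ => continuous_const
  | n + 1, γ => by
    refine Continuous.if_le (continuous_loopChain n _)
      ((γ _).continuous_extend.comp (continuous_sub_right _)) continuous_id continuous_const ?_
    intro t ht
    rw [ht, loopChain_of_ge _ le_rfl, sub_self, Path.extend_zero]

theorem loopChain_natCast_add_one : ∀ {n : ℕ} (γ : Fin n → Path z z) (i : Fin n),
    loopChain n γ ((i : ℕ) + 1) = (γ i).extend (1 / 2)
  | n + 1, γ, i => by
    induction i using Fin.lastCases with
    | last =>
      rw [loopChain, Fin.val_last, if_neg (by linarith)]
      congr 1
      ring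
    | cast j =>
      have hj : (j : ℝ) + 1 ≤ n := by exact_mod_cast j.2
      rw [loopChain, Fin.val_castSucc, if_pos (by linarith)]
      exact loopChain_natCast_add_one _ j

end LoopChain

theorem dist_loopChain_le {X : Type*} [PseudoMetricSpace X] {z : X} :
    ∀ {n : ℕ} {γ γ' : Fin n → Path z z} {D : ℝ}, 0 ≤ D →
    (∀ i t, dist (γ i t) (γ' i t) ≤ D) → ∀ t, dist (loopChain n γ t) (loopChain n γ' t) ≤ D
  | 0, _, _, _, hD, _, _ => by simpa [loopChain] using hD
  | n + 1, _, _, _, hD, h, t => by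
    simp only [loopChain]
    split_ifs
    · exact dist_loopChain_le hD (fun i => h _) t
    · exact h _ _

section Constructions

variable {X : Type*} [MetricSpace X]

def asPath {Y : Type*} [TopologicalSpace Y] {y₁ : Y} (a : {φ : PathSp Y | φ 1 = y₁}) :
    Path (a.1 0) y₁ :=
  ⟨a.1, rfl, a.2⟩

variable {m : ℕ} {x₀ : X} {y₀ : Fin m → X}

def coordLoop (β : ∀ j, Path x₀ (y₀ j)) (a : {φ : PathSp (Fin m → X) | φ 1 = y₀}) (j : Fin m) :
    Path x₀ x₀ :=
  let δ := (β j).trans ((asPath a).map (continuous_apply j)).symm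
  δ.trans δ.symm

theorem coordLoop_extend_half (β : ∀ j, Path x₀ (y₀ j))
    (a : {φ : PathSp (Fin m → X) | φ 1 = y₀}) (j : Fin m) :
    (coordLoop β a j).extend (1 / 2) = a.1 0 j := by
  rw [Path.extend_apply _ ⟨by norm_num, by norm_num⟩, coordLoop, Path.trans_apply,
    dif_pos (by norm_num)]
  convert Path.target _
  norm_num

theorem dist_coordLoop_le (β : ∀ j, Path x₀ (y₀ j)) (a b : {φ : PathSp (Fin m → X) | φ 1 = y₀})
    (j : Fin m) (t : I) : dist (coordLoop β a j t) (coordLoop β b j t) ≤ dist a b := by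
  have hβ (t : I) : dist (β j t) (β j t) ≤ dist a b := by simp
  have hcoord (t : I) : dist (a.1 t j) (b.1 t j) ≤ dist a b :=
    (dist_le_pi_dist _ _ j).trans (ContinuousMap.dist_apply_le_dist t)
  have hsymm (t : I) : dist (((asPath a).map (continuous_apply j)).symm t)
      (((asPath b).map (continuous_apply j)).symm t) ≤ dist a b :=
    hcoord (σ t)
  have hδ := Path.dist_trans_apply_le hβ hsymm
  exact Path.dist_trans_apply_le hδ (fun t => hδ (σ t)) t

def tour (β : ∀ j, Path x₀ (y₀ j)) (a : {φ : PathSp (Fin m → X) | φ 1 = y₀}) : PathSp X :=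
  ⟨fun s => loopChain m (coordLoop β a) (m * s),
    (continuous_loopChain _ _).comp (continuous_const.mul continuous_subtype_val)⟩

theorem tour_zero (β : ∀ j, Path x₀ (y₀ j)) (a : {φ : PathSp (Fin m → X) | φ 1 = y₀}) :
    tour β a 0 = x₀ :=
  loopChain_of_le_half _ (by simp)

theorem xiFib_tour (β : ∀ j, Path x₀ (y₀ j)) (a : {φ : PathSp (Fin m → X) | φ 1 = y₀}) :
    xiFib m X (tour β a) = a.1 0 := by
  funext j
  have hm : (0 : ℝ) < m := by exact_mod_cast j.pos
  have hj : ((j : ℝ) + 1) / m ∈ Icc (0 : ℝ) 1 :=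
    ⟨by positivity, (div_le_one hm).2 (by exact_mod_cast j.2)⟩
  change loopChain m _ (m * (projIcc 0 1 zero_le_one (((j : ℝ) + 1) / m) : ℝ)) = _
  rw [projIcc_of_mem _ hj, mul_div_cancel₀ _ hm.ne', loopChain_natCast_add_one,
    coordLoop_extend_half]

theorem lipschitzWith_tour (β : ∀ j, Path x₀ (y₀ j)) : LipschitzWith 1 (tour β) :=
  LipschitzWith.mk_one fun a b => (ContinuousMap.dist_le dist_nonneg).2 fun _ =>
    dist_loopChain_le dist_nonneg (dist_coordLoop_le β a b) _

variable (m) in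
def contractSamples (ψ : PathSp X) : PathSp (Fin m → X) :=
  ⟨fun t j => ψ (σ t * projIcc 0 1 zero_le_one (((j : ℝ) + 1) / m)),
    continuous_pi fun _ => ψ.continuous.comp (continuous_symm.mul continuous_const)⟩

theorem contractSamples_zero (ψ : PathSp X) : contractSamples m ψ 0 = xiFib m X ψ := by
  funext j
  simp [contractSamples, xiFib]

theorem contractSamples_one (ψ : PathSp X) : contractSamples m ψ 1 = fun _ => ψ 0 := by
  funext j
  simp [contractSamples]

theorem lipschitzWith_contractSamples : LipschitzWith 1 (contractSamples m (X := X)) :=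
  LipschitzWith.mk_one fun _ _ => (ContinuousMap.dist_le dist_nonneg).2 fun _ =>
    (dist_pi_le_iff dist_nonneg).2 fun _ => ContinuousMap.dist_apply_le_dist _

end Constructions

section Conversions

variable {X : Type*} [MetricSpace X] {m k : ℕ}

def appendPath {x₀ y₁ : X} (β : Path y₁ x₀) (a : {φ : PathSp X | φ 1 = y₁}) : Pend X x₀ :=
  ⟨((asPath a).trans β).toContinuousMap, ((asPath a).trans β).target⟩

theorem pZero_appendPath {x₀ y₁ : X} (β : Path y₁ x₀) (a : {φ : PathSp X | φ 1 = y₁}) :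
    pZero X x₀ (appendPath β a) = a.1 0 :=
  ((asPath a).trans β).source

theorem lipschitzWith_appendPath {x₀ y₁ : X} (β : Path y₁ x₀) :
    LipschitzWith 1 (appendPath β) :=
  LipschitzWith.mk_one fun a b => (ContinuousMap.dist_le dist_nonneg).2 <|
    Path.dist_trans_apply_le (fun t => ContinuousMap.dist_apply_le_dist (f := a.1) t)
      (fun t => by simp)

theorem exists_section_asub_of_isContr [PathConnectedSpace X] (x₀ : X) {y₀ : Fin m → X}
    {H : (Fin m → X) → Bmeas k (PathSp (Fin m → X))} (hH : IsContr k y₀ H) :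
    ∃ s : (Fin m → X) → Asub k m X x₀, Continuous s ∧ ∀ x, fibProj k (xiFib m X) (s x).1 = x := by
  obtain ⟨G, hG, hGT⟩ := exists_continuous_distributedOn_of_lipschitzWith
    (isClosed_eq (continuous_eval_const 1) continuous_const)
    (lipschitzWith_tour fun j => PathConnectedSpace.somePath x₀ (y₀ j)) hH.1 hH.2
    (fun _ _ h => h.2) (T := fun x => {ψ | ψ 0 = x₀ ∧ xiFib m X ψ = x})
    fun _ a ha => ⟨tour_zero _ a, (xiFib_tour _ a).trans ha.1⟩
  have hfib x : DistributedOn (G x) (xiFib m X ⁻¹' {x}) := (hGT x).mono fun _ h => h.2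
  exact ⟨fun x => ⟨⟨G x, x, hfib x⟩, (hGT x).mono fun _ h => h.1⟩,
    continuous_induced_rng.2 (hG.subtype_mk _), fun x => fibProj_eq_of_distributedOn (hfib x)⟩

theorem isContr_of_section_asub {x₀ : X} {s : (Fin m → X) → Asub k m X x₀} (hs : Continuous s)
    (hsx : ∀ x, fibProj k (xiFib m X) (s x).1 = x) :
    IsContr k (fun _ => x₀) fun x =>
      (s x).1.1.map (contractSamples m) lipschitzWith_contractSamples.continuous := by
  refine ⟨(continuous_induced_dom.comp (continuous_induced_dom.comp hs)).bmeas_map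
    lipschitzWith_contractSamples, fun x => ?_⟩
  have hsx' := (s x).2.inter (distributedOn_fiber_of_fibProj_eq (hsx x))
  refine Bmeas.distributedOn_map _ hsx' fun ψ hψ => ⟨?_, ?_⟩
  · exact (contractSamples_zero ψ).trans hψ.2
  · rw [contractSamples_one, hψ.1]

theorem exists_section_pZero_of_isContr [PathConnectedSpace X] (x₀ : X) {y₀ : X}
    {H : X → Bmeas k (PathSp X)} (hH : IsContr k y₀ H) :
    ∃ s : X → FibMeas k (pZero X x₀), Continuous s ∧ ∀ x, fibProj k (pZero X x₀) (s x) = x := by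
  obtain ⟨G, hG, hGT⟩ := exists_continuous_distributedOn_of_lipschitzWith
    (isClosed_eq (continuous_eval_const 1) continuous_const)
    (lipschitzWith_appendPath (PathConnectedSpace.somePath y₀ x₀)) hH.1 hH.2
    (fun _ _ h => h.2) (T := fun x => pZero X x₀ ⁻¹' {x})
    fun _ a ha => (pZero_appendPath _ a).trans ha.1
  exact ⟨fun x => ⟨G x, x, hGT x⟩, hG.subtype_mk _, fun x => fibProj_eq_of_distributedOn (hGT x)⟩

theorem isContr_of_section_pZero {x₀ : X} {s : X → FibMeas k (pZero X x₀)} (hs : Continuous s)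
    (hsx : ∀ x, fibProj k (pZero X x₀) (s x) = x) :
    IsContr k x₀ fun x => (s x).1.map Subtype.val continuous_subtype_val := by
  refine ⟨(continuous_subtype_val.comp hs).bmeas_map (LipschitzWith.subtype_val _), fun x => ?_⟩
  exact Bmeas.distributedOn_map _ (distributedOn_fiber_of_fibProj_eq (hsx x)) fun ψ hψ => ⟨hψ, ψ.2⟩

theorem dcat_eq_dsecat_pZero [PathConnectedSpace X] (x₀ : X) : dcat X = dsecat (pZero X x₀) := by
  unfold dcat dsecat
  congr 1
  ext c
  refine exists_congr fun k => and_congr_right fun _ => ⟨?_, ?_⟩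
  · rintro ⟨_, _, hH⟩
    exact exists_section_pZero_of_isContr x₀ hH
  · rintro ⟨_, hs, hsx⟩
    exact ⟨x₀, _, isContr_of_section_pZero hs hsx⟩

end Conversions

theorem dcat_pow_characterization_general (m : ℕ) (X : Type) [MetricSpace X]
    [PathConnectedSpace X] (x₀ : X) :
    (∀ n : ℕ,
      dcat (Fin m → X) ≤ (n : ℕ∞) ↔
        ∃ s : (Fin m → X) → Asub (n + 1) m X x₀,
          Continuous s ∧ ∀ x, fibProj (n + 1) (xiFib m X) (s x).1 = x) ∧
    dcat X = dsecat (pZero X x₀) :=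
  ⟨fun _ => dcat_le_iff.trans
    ⟨fun ⟨_, _, hH⟩ => exists_section_asub_of_isContr x₀ hH,
      fun ⟨_, hs, hsx⟩ => ⟨_, _, isContr_of_section_asub hs hsx⟩⟩,
    dcat_eq_dsecat_pZero x₀⟩

/-- Characterization of `dcat(X^m)`: `dcat(X^m) ≤ n` iff the restriction
`C_{n+1}(ξ_m) : A_{n+1}(X) → X^m` admits a continuous section; and
`dcat(X) = dsecat(p_0)`. -/
theorem dcat_pow_characterization (m : ℕ) (hm : 1 ≤ m) (X : Type) [MetricSpace X]
    [PathConnectedSpace X] (x₀ : X) :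
    (∀ n : ℕ,
      dcat (Fin m → X) ≤ (n : ℕ∞) ↔
        ∃ s : (Fin m → X) → Asub (n + 1) m X x₀,
          Continuous s ∧ ∀ x, fibProj (n + 1) (xiFib m X) (s x).1 = x) ∧
    dcat X = dsecat (pZero X x₀) :=
  dcat_pow_characterization_general m X x₀
end
end

section
/- For any Hurewicz fibration p : E → B of metric spaces, dsecat(p) ≤ asecat(p): the distributional sectional category is bounded above by the analog sectional category. Consequently, dcat(X) ≤ acat(X) and dTC_m(X) ≤ ATC_m(X) for all m ≥ 2. -/
open MeasureTheory unitInterval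

noncomputable section

/-- Raw data for formal probability measures supported on at most `n` points:
the disjoint union `⨆_{i=1}^{n} E^i × Δ^{i-1}`. -/
def rawP (n : ℕ) (E : Type*) : Type _ :=
  Σ i : Fin n, (Fin ((i : ℕ) + 1) → E) × (stdSimplex ℝ (Fin ((i : ℕ) + 1)))

instance (n : ℕ) (E : Type*) [TopologicalSpace E] : TopologicalSpace (rawP n E) :=
  inferInstanceAs (TopologicalSpace
    (Σ i : Fin n, (Fin ((i : ℕ) + 1) → E) × (stdSimplex ℝ (Fin ((i : ℕ) + 1)))))

open Classical in
/-- The mass function of a raw weighted tuple. -/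
noncomputable def massOfRaw {n : ℕ} {E : Type*} (z : rawP n E) (x : E) : ℝ :=
  ∑ j, if z.2.1 j = x then (z.2.2 : Fin ((z.1 : ℕ) + 1) → ℝ) j else 0

/-- Two raw tuples are identified iff they represent the same formal measure; this is the
equivalence generated by permutations, merging of repeated points and dropping of
zero weights. -/
def Psetoid (n : ℕ) (E : Type*) : Setoid (rawP n E) := Setoid.ker massOfRaw

/-- The space `𝒫_n(E)` of formal probability measures supported on at most `n` points,
with the quotient topology `𝒯₁`. -/
def PmeasA (n : ℕ) (E : Type*) [TopologicalSpace E] : Type _ := Quotient (Psetoid n E)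

instance (n : ℕ) (E : Type*) [TopologicalSpace E] : TopologicalSpace (PmeasA n E) :=
  instTopologicalSpaceQuotient

/-- The mass function of a formal measure. -/
noncomputable def PmeasA.mass {n : ℕ} {E : Type*} [TopologicalSpace E] :
    PmeasA n E → E → ℝ :=
  Quotient.lift massOfRaw (fun _ _ h => h)

/-- `𝒫_n(p)`: the subspace of formal measures supported in a single fiber of `p`. -/
def PmeasFib (n : ℕ) {E B : Type*} [TopologicalSpace E] (p : E → B) : Type _ :=
  {μ : PmeasA n E // ∃ b : B, ∀ x : E, PmeasA.mass μ x ≠ 0 → p x = b}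

instance (n : ℕ) {E B : Type*} [TopologicalSpace E] (p : E → B) :
    TopologicalSpace (PmeasFib n p) := instTopologicalSpaceSubtype

/-- The map `φ_n(p) : 𝒫_n(p) → B`. -/
noncomputable def phiMap (n : ℕ) {E B : Type*} [TopologicalSpace E] (p : E → B)
    (μ : PmeasFib n p) : B :=
  Classical.choose μ.2

/-- The analog sectional category of a map `p : E → B`. -/
noncomputable def asecat {E B : Type*} [TopologicalSpace E] [TopologicalSpace B]
    (p : E → B) : ℕ∞ :=
  sInf {c : ℕ∞ | ∃ k : ℕ, c = k ∧
    ∃ s : B → PmeasFib (k + 1) p, Continuous s ∧ ∀ b, phiMap (k + 1) p (s b) = b}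

/-! On each stratum `E^i × Δ^{i-1}` of `𝒫_n(E)`, moving every point by at most `δ` and every
weight by at most `δ` moves the measure `∑ wⱼ δ_{xⱼ}` by at most `i δ` in the Lévy–Prokhorov
metric. Hence the identity `(𝒫_n(E), 𝒯₁) → B_n(E)` is continuous, and composing it with an
analog section gives a distributional one. For `acat` the measures live on `P₀(X)` and are first
pushed forward along the injection `P₀(X) → P(X)`. -/

section DiracSum

variable {W ι : Type*} [MeasurableSpace W] [Fintype ι]

def diracSum (x : ι → W) (w : ι → ℝ) : Measure W :=
  ∑ j, ENNReal.ofReal (w j) • Measure.dirac (x j)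

lemma diracSum_apply (x : ι → W) (w : ι → ℝ) {A : Set W} (hA : MeasurableSet A) :
    diracSum x w A = ∑ j, ENNReal.ofReal (w j) * A.indicator 1 (x j) := by
  simp [diracSum, Measure.dirac_apply' _ hA]

lemma diracSum_univ (x : ι → W) {w : ι → ℝ} (hw : 0 ≤ w) (hw1 : ∑ j, w j = 1) :
    diracSum x w Set.univ = 1 := by
  simp [diracSum_apply x w MeasurableSet.univ, ← ENNReal.ofReal_sum_of_nonneg (fun j _ => hw j),
    hw1]

lemma diracSum_eq_sum_fiberwise [DecidableEq W] (x : ι → W) {w : ι → ℝ} (hw : 0 ≤ w)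
    (T : Finset W) (hT : ∀ j, x j ∈ T) :
    diracSum x w = ∑ y ∈ T, ENNReal.ofReal (∑ j with x j = y, w j) • Measure.dirac y := by
  rw [diracSum, ← Finset.sum_fiberwise_of_maps_to (g := x) (fun j _ => hT j)]
  refine Finset.sum_congr rfl fun y _ => ?_
  rw [ENNReal.ofReal_sum_of_nonneg (fun j _ => hw j), Finset.sum_smul]
  refine Finset.sum_congr rfl fun j hj => ?_
  rw [(Finset.mem_filter.mp hj).2]

variable [PseudoMetricSpace W] [OpensMeasurableSpace W]

lemma diracSum_le_thickening {x x' : ι → W} {w w' : ι → ℝ} (hw' : 0 ≤ w') {ε : ℝ}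
    (hx : ∀ j, dist (x j) (x' j) < ε) (A : Set W) (hA : MeasurableSet A) :
    diracSum x w A ≤ diracSum x' w' (Metric.thickening ε A)
      + ENNReal.ofReal (∑ j, |w j - w' j|) := by
  rw [diracSum_apply x w hA, diracSum_apply x' w' Metric.isOpen_thickening.measurableSet,
    ENNReal.ofReal_sum_of_nonneg (fun j _ => abs_nonneg _), ← Finset.sum_add_distrib]
  refine Finset.sum_le_sum fun j _ => ?_
  by_cases hj : x j ∈ A
  · have hj' : x' j ∈ Metric.thickening ε A :=
      Metric.mem_thickening_iff.mpr ⟨x j, hj, by rw [dist_comm]; exact hx j⟩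
    simp only [Set.indicator_of_mem hj, Set.indicator_of_mem hj', Pi.one_apply, mul_one]
    rw [← ENNReal.ofReal_add (hw' j) (abs_nonneg _)]
    exact ENNReal.ofReal_le_ofReal (by linarith [le_abs_self (w j - w' j)])
  · simp [Set.indicator_of_notMem hj]

lemma levyProkhorovEDist_diracSum_le {x x' : ι → W} {w w' : ι → ℝ} (hw : 0 ≤ w)
    (hw' : 0 ≤ w') {δ : ℝ} (hx : ∀ j, dist (x j) (x' j) ≤ δ) (hwδ : ∑ j, |w j - w' j| ≤ δ) :
    levyProkhorovEDist (diracSum x w) (diracSum x' w') ≤ ENNReal.ofReal δ := by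
  refine levyProkhorovEDist_le_of_forall _ _ _ fun ε A hδε hε hA => ?_
  have hδ : 0 ≤ δ := (Finset.sum_nonneg fun _ _ => abs_nonneg _).trans hwδ
  have hδε' : δ < ε.toReal := (ENNReal.ofReal_lt_iff_lt_toReal hδ hε.ne).mp hδε
  have hwε : ∀ {v v' : ι → ℝ}, ∑ j, |v j - v' j| ≤ δ →
      ENNReal.ofReal (∑ j, |v j - v' j|) ≤ ε :=
    fun h => (ENNReal.ofReal_le_ofReal h).trans hδε.le
  refine ⟨(diracSum_le_thickening hw' (fun j => (hx j).trans_lt hδε') A hA).trans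
      (add_le_add le_rfl (hwε hwδ)),
    (diracSum_le_thickening hw (fun j => ?_) A hA).trans (add_le_add le_rfl (hwε ?_))⟩
  · exact (dist_comm (x' j) (x j) ▸ hx j).trans_lt hδε'
  · simpa only [abs_sub_comm] using hwδ

end DiracSum

section RawMeasure

variable {n : ℕ} {W : Type*}

lemma massOfRaw_eq_sum_filter [DecidableEq W] (z : rawP n W) (y : W) :
    massOfRaw z y = ∑ j with z.2.1 j = y, z.2.2.1 j := by
  rw [Finset.sum_filter, massOfRaw]
  congr!

open Classical in
def rawSupport (z : rawP n W) : Finset W := {y ∈ Finset.univ.image z.2.1 | massOfRaw z y ≠ 0}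

lemma card_rawSupport_le (z : rawP n W) : (rawSupport z).card ≤ n := by
  classical
  calc (rawSupport z).card ≤ (Finset.univ.image z.2.1).card := Finset.card_filter_le _ _
    _ ≤ (z.1 : ℕ) + 1 := Finset.card_image_le.trans_eq (by simp)
    _ ≤ n := z.1.2

variable [MeasurableSpace W]

def rawMeas (z : rawP n W) : Measure W := diracSum z.2.1 z.2.2.1

instance (z : rawP n W) : IsProbabilityMeasure (rawMeas z) :=
  ⟨diracSum_univ _ z.2.2.2.1 z.2.2.2.2⟩

lemma rawMeas_eq_sum_mass [DecidableEq W] (z : rawP n W) (T : Finset W)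
    (hT : ∀ j, z.2.1 j ∈ T) :
    rawMeas z = ∑ y ∈ T, ENNReal.ofReal (massOfRaw z y) • Measure.dirac y := by
  simp only [rawMeas, diracSum_eq_sum_fiberwise _ z.2.2.2.1 T hT, massOfRaw_eq_sum_filter]

lemma rawMeas_congr {z z' : rawP n W} (h : massOfRaw z = massOfRaw z') :
    rawMeas z = rawMeas z' := by
  classical
  let T := Finset.univ.image z.2.1 ∪ Finset.univ.image z'.2.1
  rw [rawMeas_eq_sum_mass z T (fun j => by simp [T]),
    rawMeas_eq_sum_mass z' T (fun j => by simp [T]), h]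

lemma rawMeas_rawSupport (z : rawP n W) : rawMeas z (rawSupport z) = 1 := by
  classical
  have hsupp :
      rawMeas z = ∑ y ∈ rawSupport z, ENNReal.ofReal (massOfRaw z y) • Measure.dirac y := by
    rw [rawMeas_eq_sum_mass z (Finset.univ.image z.2.1) (by simp), rawSupport]
    refine (Finset.sum_filter_of_ne fun y _ hy => ?_).symm
    contrapose! hy
    simp [hy]
  rw [← measure_univ (μ := rawMeas z), hsupp]
  simp only [Measure.coe_finsetSum, Measure.coe_smul, Finset.sum_apply, Pi.smul_apply]
  refine Finset.sum_congr rfl fun y hy => ?_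
  rw [Measure.dirac_apply_of_mem hy, Measure.dirac_apply_of_mem (Set.mem_univ y)]

end RawMeasure

section RawLevyProkhorov

variable {n : ℕ} {W : Type*} [MetricSpace W] [MeasurableSpace W] [BorelSpace W]

def rawLP (z : rawP n W) : LevyProkhorov (ProbabilityMeasure W) :=
  .ofMeasure ⟨rawMeas z, inferInstance⟩

lemma dist_rawLP_le {i : Fin n}
    (a b : (Fin ((i : ℕ) + 1) → W) × stdSimplex ℝ (Fin ((i : ℕ) + 1))) :
    dist (rawLP (⟨i, a⟩ : rawP n W)) (rawLP ⟨i, b⟩) ≤ ((i : ℕ) + 1) * dist a b := by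
  have hcard : (1 : ℝ) ≤ (i : ℕ) + 1 := by simp
  have hdist := dist_nonneg (x := a) (y := b)
  rw [LevyProkhorov.dist_probabilityMeasure_def]
  refine ENNReal.toReal_le_of_le_ofReal (by positivity) (levyProkhorovEDist_diracSum_le
    a.2.2.1 b.2.2.1 (fun j => ?_) ?_)
  · calc dist (a.1 j) (b.1 j) ≤ dist a b := (dist_le_pi_dist _ _ j).trans (le_max_left _ _)
      _ ≤ _ := le_mul_of_one_le_left hdist hcard
  · calc ∑ j, |a.2.1 j - b.2.1 j| ≤ ∑ _j : Fin ((i : ℕ) + 1), dist a b :=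
          Finset.sum_le_sum fun j _ => (dist_le_pi_dist a.2.1 b.2.1 j).trans (le_max_right _ _)
      _ = _ := by simp

lemma continuous_rawLP : Continuous (rawLP : rawP n W → _) :=
  continuous_sigma fun i =>
    (LipschitzWith.of_dist_le_mul (K := (i : ℕ) + 1) fun a b => by
      exact_mod_cast dist_rawLP_le a b).continuous

end RawLevyProkhorov

def rawP.map {n : ℕ} {Z W : Type*} (f : Z → W) (z : rawP n Z) : rawP n W :=
  ⟨z.1, f ∘ z.2.1, z.2.2⟩

namespace rawP

variable {n : ℕ} {Z W : Type*} {f : Z → W}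

lemma continuous_map [TopologicalSpace Z] [TopologicalSpace W] (hf : Continuous f) :
    Continuous (rawP.map (n := n) f) :=
  continuous_sigma fun _ => continuous_sigmaMk.comp
    ((continuous_pi fun j => hf.comp ((continuous_apply j).comp continuous_fst)).prodMk
      continuous_snd)

lemma massOfRaw_map_apply (hf : f.Injective) (z : rawP n Z) (x : Z) :
    massOfRaw (z.map f) (f x) = massOfRaw z x := by
  classical
  exact Finset.sum_congr rfl fun j _ => if_congr hf.eq_iff rfl rfl

lemma massOfRaw_map_of_notMem_range (z : rawP n Z) {y : W} (hy : y ∉ Set.range f) :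
    massOfRaw (z.map f) y = 0 :=
  Finset.sum_eq_zero fun j _ => if_neg fun h => hy ⟨z.2.1 j, h⟩

lemma massOfRaw_map_congr (hf : f.Injective) {z z' : rawP n Z}
    (h : massOfRaw z = massOfRaw z') : massOfRaw (z.map f) = massOfRaw (z'.map f) := by
  funext y
  by_cases hy : y ∈ Set.range f
  · obtain ⟨x, rfl⟩ := hy
    rw [massOfRaw_map_apply hf, massOfRaw_map_apply hf, h]
  · rw [massOfRaw_map_of_notMem_range z hy, massOfRaw_map_of_notMem_range z' hy]

end rawP

namespace PmeasA

variable {n : ℕ} {Z W : Type*}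

def toBmeas [MetricSpace W] : PmeasA n W → Bmeas n W :=
  letI : MeasurableSpace W := borel W
  haveI : BorelSpace W := ⟨rfl⟩
  Quotient.lift (fun z => ⟨rawLP z, rawSupport z, card_rawSupport_le z, by
      simp [rawLP, rawMeas_rawSupport]⟩)
    fun _ _ h => Subtype.ext <| congrArg LevyProkhorov.ofMeasure <| Subtype.ext <|
      rawMeas_congr h

lemma continuous_toBmeas [MetricSpace W] : Continuous (toBmeas : PmeasA n W → Bmeas n W) :=
  letI : MeasurableSpace W := borel W
  haveI : BorelSpace W := ⟨rfl⟩
  continuous_rawLP.subtype_mk _ |>.quotient_lift _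

lemma toBmeas_distributedOn [MetricSpace W] (μ : PmeasA n W) {A : Set W}
    (hA : ∀ x, mass μ x ≠ 0 → x ∈ A) : DistributedOn (toBmeas μ) A := by
  let : MeasurableSpace W := borel W
  have : BorelSpace W := ⟨rfl⟩
  induction μ using Quotient.inductionOn with | h z => ?_
  classical
  refine ⟨rawSupport z, fun y hy => hA y (Finset.mem_filter.mp hy).2, ?_⟩
  change (rawMeas z (rawSupport z)).toNNReal = 1
  rw [rawMeas_rawSupport, ENNReal.toNNReal_one]

variable [TopologicalSpace Z] [TopologicalSpace W] {f : Z → W}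

def map (f : Z → W) (hf : f.Injective) : PmeasA n Z → PmeasA n W :=
  Quotient.map (rawP.map f) fun _ _ h => rawP.massOfRaw_map_congr hf h

lemma continuous_map (hf : f.Injective) (hfc : Continuous f) : Continuous (map (n := n) f hf) :=
  (continuous_quot_mk.comp (rawP.continuous_map hfc)).quotient_lift _

lemma exists_eq_of_mass_map_ne_zero (hf : f.Injective) (μ : PmeasA n Z) {y : W}
    (hy : mass (map f hf μ) y ≠ 0) : ∃ x, mass μ x ≠ 0 ∧ f x = y := by
  induction μ using Quotient.inductionOn with | h z => ?_
  change massOfRaw (z.map f) y ≠ 0 at hy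
  change ∃ x, massOfRaw z x ≠ 0 ∧ f x = y
  by_cases hr : y ∈ Set.range f
  · obtain ⟨x, rfl⟩ := hr
    exact ⟨x, by rwa [← rawP.massOfRaw_map_apply hf], rfl⟩
  · exact absurd (rawP.massOfRaw_map_of_notMem_range z hr) hy

end PmeasA

lemma DistributedOn.inter_nonempty {Z : Type*} [MetricSpace Z] {n : ℕ} {μ : Bmeas n Z}
    {A A' : Set Z} (h : DistributedOn μ A) (h' : DistributedOn μ A') : (A ∩ A').Nonempty := by
  let : MeasurableSpace Z := borel Z
  have : BorelSpace Z := ⟨rfl⟩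
  obtain ⟨S, hSA, hS⟩ := h
  obtain ⟨S', hSA', hS'⟩ := h'
  have hae : ∀ {T : Finset Z}, Bmeas.meas μ T = 1 →
      (T : Set Z) ∈ ae (Bmeas.meas μ : Measure Z) :=
    fun hT => (mem_ae_iff_prob_eq_one (Finset.measurableSet _)).mpr <| by
      rw [← ProbabilityMeasure.ennreal_coeFn_eq_coeFn_toMeasure, hT, ENNReal.coe_one]
  obtain ⟨x, hx, hx'⟩ := Filter.nonempty_of_mem (Filter.inter_mem (hae hS) (hae hS'))
  exact ⟨x, hSA hx, hSA' hx'⟩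

lemma fibProj_eq {k : ℕ} {E B : Type*} [MetricSpace E] {p : E → B} (μ : FibMeas k p) {b : B}
    (h : DistributedOn μ.1 (p ⁻¹' {b})) : fibProj k p μ = b := by
  obtain ⟨x, hx, hx'⟩ := (Classical.choose_spec μ.2).inter_nonempty h
  exact hx.symm.trans hx'

lemma eq_phiMap_of_mass_ne_zero {n : ℕ} {E B : Type*} [TopologicalSpace E] {p : E → B}
    (μ : PmeasFib n p) {x : E} (hx : PmeasA.mass μ.1 x ≠ 0) : p x = phiMap n p μ :=
  Classical.choose_spec μ.2 x hx

theorem dsecat_le_asecat' {E B : Type*} [MetricSpace E] [MetricSpace B] (p : E → B) :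
    dsecat p ≤ asecat p := by
  refine sInf_le_sInf ?_
  rintro _ ⟨k, rfl, s, hs, hsec⟩
  have hdist : ∀ b, DistributedOn (s b).1.toBmeas (p ⁻¹' {b}) := fun b =>
    PmeasA.toBmeas_distributedOn _ fun x hx =>
      (eq_phiMap_of_mass_ne_zero (s b) hx).trans (hsec b)
  exact ⟨k, rfl, fun b => ⟨(s b).1.toBmeas, b, hdist b⟩,
    (PmeasA.continuous_toBmeas.comp hs.subtype_val).subtype_mk _,
    fun b => fibProj_eq _ (hdist b)⟩

theorem dcat_le_asecat_pZero (X : Type*) [MetricSpace X] (x₀ : X) :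
    dcat X ≤ asecat (pZero X x₀) := by
  refine sInf_le_sInf ?_
  rintro _ ⟨k, rfl, s, hs, hsec⟩
  refine ⟨k, rfl, x₀, fun y => ((s y).1.map Subtype.val Subtype.val_injective).toBmeas,
    PmeasA.continuous_toBmeas.comp
      ((PmeasA.continuous_map _ continuous_subtype_val).comp hs.subtype_val),
    fun y => PmeasA.toBmeas_distributedOn _ fun φ hφ => ?_⟩
  obtain ⟨ψ, hψ, rfl⟩ := PmeasA.exists_eq_of_mass_map_ne_zero _ _ hφ
  exact ⟨(eq_phiMap_of_mass_ne_zero (s y) hψ).trans (hsec y), ψ.2⟩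

theorem dTC_le_asecat_piFib (m : ℕ) (X : Type*) [MetricSpace X] :
    dTC m X ≤ asecat (piFib m X) := by
  refine sInf_le_sInf ?_
  rintro _ ⟨k, rfl, s, hs, hsec⟩
  refine ⟨k, rfl, fun x => (s x).1.toBmeas,
    PmeasA.continuous_toBmeas.comp hs.subtype_val,
    fun x => PmeasA.toBmeas_distributedOn _ fun φ hφ => ?_⟩
  exact congrFun ((eq_phiMap_of_mass_ne_zero (s x) hφ).trans (hsec x))

theorem dsecat_le_asecat_general (E B : Type) [MetricSpace E] [MetricSpace B]
    (p : E → B)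
    (X : Type) [MetricSpace X] (x₀ : X) (m : ℕ) :
    dsecat p ≤ asecat p ∧
      dcat X ≤ asecat (pZero X x₀) ∧
      dTC m X ≤ asecat (piFib m X) :=
  ⟨dsecat_le_asecat' p, dcat_le_asecat_pZero X x₀, dTC_le_asecat_piFib m X⟩

/-- For any Hurewicz fibration `p : E → B` of metric spaces, `dsecat(p) ≤ asecat(p)`.
Consequently, `dcat(X) ≤ acat(X)` and `dTC_m(X) ≤ ATC_m(X)` for all `m ≥ 2`, where
`acat(X) = asecat(p₀)` and `ATC_m(X) = asecat(π_m)`. -/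
theorem dsecat_le_asecat (E B : Type) [MetricSpace E] [MetricSpace B]
    (p : E → B) (hp : Continuous p) (hfib : IsHurFib p)
    (X : Type) [MetricSpace X] [PathConnectedSpace X] (x₀ : X) (m : ℕ) (hm : 2 ≤ m) :
    dsecat p ≤ asecat p ∧
      dcat X ≤ asecat (pZero X x₀) ∧
      dTC m X ≤ asecat (piFib m X) :=
  dsecat_le_asecat_general E B p X x₀ m
end
end
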